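/- For every smooth solution (u, d_a, v, w) of the FT2S reduction, the auxiliary constraints satisfy the closed linear evolution system: dt c_a = ((A^u_u)^b + (D^u)^b) da c_b + (Dbar^u)^{kb} da c_{kb} - D_a^b c_b - Dbar_a^{kb} c_{kb}, and dt c_{ia} = (1/2)(D_a^b di c_b - D_i^b da c_b + Dbar_a^{kb} di c_{kb} - Dbar_i^{kb} da c_{kb}). In particular the right-hand sides involve only the constraints c_a, c_{ia} and their first spatial derivatives. -/

import Mathlib

open Matrix

/-- Spacetime `ℝ × ℝ³`. -/
abbrev Spc : Type := ℝ × (Fin 3 → ℝ)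

/-- The time derivative `∂ₜ`. -/
noncomputable def Dt {E : Type*} [NormedAddCommGroup E] [NormedSpace ℝ E]
    (f : Spc → E) : Spc → E :=
  fun z => fderiv ℝ f z (1, 0)

/-- The spatial partial derivative `∂ᵢ`. -/
noncomputable def Dx {E : Type*} [NormedAddCommGroup E] [NormedSpace ℝ E]
    (i : Fin 3) (f : Spc → E) : Spc → E :=
  fun z => fderiv ℝ f z (0, Pi.single i 1)

/-- The auxiliary constraint `c_a = ∂_a u - d_a`. -/
noncomputable def cA {nu : ℕ} (u : Spc → Fin nu → ℂ) (dd : Fin 3 → Spc → Fin nu → ℂ)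
    (a : Fin 3) : Spc → Fin nu → ℂ :=
  fun z => Dx a u z - dd a z

/-- The auxiliary constraint `c_{ia} = (1/2)(∂ᵢ d_a - ∂_a dᵢ)`. -/
noncomputable def cIA {nu : ℕ} (dd : Fin 3 → Spc → Fin nu → ℂ)
    (i a : Fin 3) : Spc → Fin nu → ℂ :=
  fun z => (2 : ℂ)⁻¹ • (Dx i (dd a) z - Dx a (dd i) z)


/-! ### Helper machinery: directional derivatives -/

/-- directional derivative along `e` -/
noncomputable def Dir {E : Type*} [NormedAddCommGroup E] [NormedSpace ℝ E]
    (e : Spc) (f : Spc → E) : Spc → E :=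
  fun z => fderiv ℝ f z e

/-- the spatial direction vectors -/
def ev (i : Fin 3) : Spc := (0, Pi.single i 1)

/-- the time direction vector -/
def evt : Spc := (1, 0)

lemma Dt_eq {E : Type*} [NormedAddCommGroup E] [NormedSpace ℝ E] (f : Spc → E) :
    Dt f = Dir evt f := rfl

lemma Dx_eq {E : Type*} [NormedAddCommGroup E] [NormedSpace ℝ E] (i : Fin 3) (f : Spc → E) :
    Dx i f = Dir (ev i) f := rfl

section helpers
variable {E F : Type*} [NormedAddCommGroup E] [NormedSpace ℝ E]
  [NormedAddCommGroup F] [NormedSpace ℝ F] (e : Spc)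

lemma Dir_contDiff {f : Spc → E} (hf : ContDiff ℝ (⊤ : ℕ∞) f) : ContDiff ℝ (⊤ : ℕ∞) (Dir e f) :=
  (hf.fderiv_right (by simp)).clm_apply contDiff_const

lemma Dir_diff {f : Spc → E} (hf : ContDiff ℝ (⊤ : ℕ∞) f) : Differentiable ℝ (Dir e f) :=
  (Dir_contDiff e hf).differentiable (by simp)

lemma Dir_add {f g : Spc → E} (hf : Differentiable ℝ f) (hg : Differentiable ℝ g) :
    Dir e (fun z => f z + g z) = fun z => Dir e f z + Dir e g z := by
  funext z
  simp [Dir, fderiv_fun_add (hf z) (hg z)]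

lemma Dir_sub {f g : Spc → E} (hf : Differentiable ℝ f) (hg : Differentiable ℝ g) :
    Dir e (fun z => f z - g z) = fun z => Dir e f z - Dir e g z := by
  funext z
  simp [Dir, fderiv_fun_sub (hf z) (hg z)]

lemma Dir_clm (L : E →L[ℝ] F) {g : Spc → E} (hg : Differentiable ℝ g) :
    Dir e (fun z => L (g z)) = fun z => L (Dir e g z) := by
  funext z
  have : fderiv ℝ (fun z => L (g z)) z = L.comp (fderiv ℝ g z) :=
    (L.hasFDerivAt.comp z (hg z).hasFDerivAt).fderiv
  simp [Dir, this]

lemma Dir_swap {f : Spc → E} (hf : ContDiff ℝ (⊤ : ℕ∞) f) (e₁ e₂ : Spc) :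
    Dir e₁ (Dir e₂ f) = Dir e₂ (Dir e₁ f) := by
  have hd : Differentiable ℝ f := hf.differentiable (by simp)
  have hd2 : Differentiable ℝ (fderiv ℝ f) :=
    (hf.fderiv_right (m := 1) (by exact WithTop.coe_le_coe.mpr le_top)).differentiable (by simp)
  have key : ∀ v w : Spc, ∀ z, Dir v (Dir w f) z = fderiv ℝ (fderiv ℝ f) z v w := by
    intro v w z
    have h1 : Dir w f = fun y => (fderiv ℝ f y) w := rfl
    rw [Dir, h1, fderiv_clm_apply (hd2 z) (differentiableAt_const w)]
    simp
  funext z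
  rw [key, key]
  exact second_derivative_symmetric (fun y => (hd y).hasFDerivAt)
    (hd2 z).hasFDerivAt _ _
end helpers

section matrixHelpers
variable {m' n' : ℕ} (e : Spc)

/-- `mulVec` as a continuous `ℝ`-linear map. -/
noncomputable def mvL (M : Matrix (Fin m') (Fin n') ℂ) : (Fin n' → ℂ) →L[ℝ] (Fin m' → ℂ) :=
  LinearMap.toContinuousLinearMap ((Matrix.mulVecLin M).restrictScalars ℝ)

@[simp] lemma mvL_apply (M : Matrix (Fin m') (Fin n') ℂ) (x : Fin n' → ℂ) :
    mvL M x = M *ᵥ x := rfl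

/-- scalar multiplication by a complex constant as a continuous `ℝ`-linear map. -/
noncomputable def sL (n' : ℕ) (c : ℂ) : (Fin n' → ℂ) →L[ℝ] (Fin n' → ℂ) :=
  (c • ContinuousLinearMap.id ℂ (Fin n' → ℂ)).restrictScalars ℝ

@[simp] lemma sL_apply (c : ℂ) (x : Fin n' → ℂ) : sL n' c x = c • x := rfl

lemma Dir_mulVec (M : Matrix (Fin m') (Fin n') ℂ) {g : Spc → Fin n' → ℂ}
    (hg : Differentiable ℝ g) :
    Dir e (fun z => M *ᵥ g z) = fun z => M *ᵥ Dir e g z := by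
  have := Dir_clm e (mvL M) hg
  simpa using this

lemma Dir_smulc (c : ℂ) {g : Spc → Fin n' → ℂ} (hg : Differentiable ℝ g) :
    Dir e (fun z => c • g z) = fun z => c • Dir e g z := by
  have := Dir_clm e (sL n' c) hg
  simpa using this

lemma diff_mulVec (M : Matrix (Fin m') (Fin n') ℂ) {g : Spc → Fin n' → ℂ}
    (hg : Differentiable ℝ g) : Differentiable ℝ (fun z => M *ᵥ g z) :=
  (mvL M).differentiable.comp hg

lemma Dir_sum {f : Fin 3 → Spc → Fin n' → ℂ} (hf : ∀ i, Differentiable ℝ (f i)) :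
    Dir e (fun z => ∑ i, f i z) = fun z => ∑ i, Dir e (f i) z := by
  funext z
  simp [Dir, fderiv_fun_sum (fun i _ => (hf i z))]

lemma Dir_sumMulVec (M : Fin 3 → Matrix (Fin m') (Fin n') ℂ) {g : Fin 3 → Spc → Fin n' → ℂ}
    (hg : ∀ i, Differentiable ℝ (g i)) :
    Dir e (fun z => ∑ i, M i *ᵥ g i z) = fun z => ∑ i, M i *ᵥ Dir e (g i) z := by
  rw [Dir_sum e (fun i => diff_mulVec (M i) (hg i))]
  funext z
  exact Finset.sum_congr rfl fun i _ => congrFun (Dir_mulVec e (M i) (hg i)) z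

lemma Dir_sum2MulVec (M : Fin 3 → Fin 3 → Matrix (Fin m') (Fin n') ℂ)
    {g : Fin 3 → Fin 3 → Spc → Fin n' → ℂ} (hg : ∀ i j, Differentiable ℝ (g i j)) :
    Dir e (fun z => ∑ i, ∑ j, M i j *ᵥ g i j z)
      = fun z => ∑ i, ∑ j, M i j *ᵥ Dir e (g i j) z := by
  rw [Dir_sum e (fun i => Differentiable.fun_sum (fun j _ => diff_mulVec (M i j) (hg i j)))]
  funext z
  exact Finset.sum_congr rfl fun i _ => congrFun (Dir_sumMulVec e (M i) (hg i)) z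

end matrixHelpers

variable {nu nv nw : ℕ}
  (Auu : Fin 3 → Matrix (Fin nu) (Fin nu) ℂ) (Auv : Matrix (Fin nu) (Fin nv) ℂ)
  (Bu1u : Matrix (Fin nu) (Fin nu) ℂ)
  (Avu : Fin 3 → Fin 3 → Matrix (Fin nv) (Fin nu) ℂ)
  (Avv : Fin 3 → Matrix (Fin nv) (Fin nv) ℂ)
  (Avw : Matrix (Fin nv) (Fin nw) ℂ) (Bv1u : Fin 3 → Matrix (Fin nv) (Fin nu) ℂ)
  (Bv2u : Matrix (Fin nv) (Fin nu) ℂ) (Bv1v : Matrix (Fin nv) (Fin nv) ℂ)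
  (Awu : Fin 3 → Fin 3 → Fin 3 → Matrix (Fin nw) (Fin nu) ℂ)
  (Awv : Fin 3 → Fin 3 → Matrix (Fin nw) (Fin nv) ℂ)
  (Aww : Fin 3 → Matrix (Fin nw) (Fin nw) ℂ)
  (Bw1u : Fin 3 → Fin 3 → Matrix (Fin nw) (Fin nu) ℂ)
  (Bw2u : Fin 3 → Matrix (Fin nw) (Fin nu) ℂ)
  (Bw3u : Matrix (Fin nw) (Fin nu) ℂ) (Bw1v : Fin 3 → Matrix (Fin nw) (Fin nv) ℂ)
  (Bw2v : Matrix (Fin nw) (Fin nv) ℂ) (Bw1w : Matrix (Fin nw) (Fin nw) ℂ)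
  (su : Spc → Fin nu → ℂ) (sv : Spc → Fin nv → ℂ) (sw : Spc → Fin nw → ℂ)
  (Du : Fin 3 → Matrix (Fin nu) (Fin nu) ℂ)
  (Dbaru : Fin 3 → Fin 3 → Matrix (Fin nu) (Fin nu) ℂ)
  (DD : Fin 3 → Fin 3 → Matrix (Fin nu) (Fin nu) ℂ)
  (Dbar : Fin 3 → Fin 3 → Fin 3 → Matrix (Fin nu) (Fin nu) ℂ)
  (Dv : Fin 3 → Matrix (Fin nv) (Fin nu) ℂ)
  (Dbarv : Fin 3 → Fin 3 → Matrix (Fin nv) (Fin nu) ℂ)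
  (Dw : Fin 3 → Fin 3 → Matrix (Fin nw) (Fin nu) ℂ)
  (Dbarw : Fin 3 → Fin 3 → Fin 3 → Matrix (Fin nw) (Fin nu) ℂ)

/-- `(u, v, w)` solves the FT3S system. -/
def SolvesFT3S (u : Spc → Fin nu → ℂ) (v : Spc → Fin nv → ℂ) (w : Spc → Fin nw → ℂ) :
    Prop :=
  (∀ z, Dt u z = (∑ i, Auu i *ᵥ Dx i u z) + Auv *ᵥ v z + Bu1u *ᵥ u z + su z) ∧
  (∀ z, Dt v z = (∑ i, ∑ j, Avu i j *ᵥ Dx i (Dx j u) z) + (∑ i, Avv i *ᵥ Dx i v z)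
      + Avw *ᵥ w z + (∑ i, Bv1u i *ᵥ Dx i u z) + Bv2u *ᵥ u z + Bv1v *ᵥ v z + sv z) ∧
  (∀ z, Dt w z = (∑ i, ∑ j, ∑ k, Awu i j k *ᵥ Dx i (Dx j (Dx k u)) z)
      + (∑ i, ∑ j, Awv i j *ᵥ Dx i (Dx j v) z) + (∑ i, Aww i *ᵥ Dx i w z)
      + (∑ i, ∑ j, Bw1u i j *ᵥ Dx i (Dx j u) z) + (∑ i, Bw2u i *ᵥ Dx i u z)
      + Bw3u *ᵥ u z + (∑ i, Bw1v i *ᵥ Dx i v z) + Bw2v *ᵥ v z + Bw1w *ᵥ w z + sw z)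

/-- `(u, d_a, v, w)` solves the FT2S reduction with the given reduction parameters. -/
def SolvesFT2S (u : Spc → Fin nu → ℂ) (dd : Fin 3 → Spc → Fin nu → ℂ)
    (v : Spc → Fin nv → ℂ) (w : Spc → Fin nw → ℂ) : Prop :=
  (∀ z, Dt u z = (∑ i, Auu i *ᵥ Dx i u z) + Auv *ᵥ v z + Bu1u *ᵥ u z + su z
      + (∑ a, Du a *ᵥ cA u dd a z) + (∑ i, ∑ a, Dbaru i a *ᵥ cIA dd i a z)) ∧
  (∀ a z, Dt (dd a) z = Bu1u *ᵥ Dx a u z + (∑ b, Auu b *ᵥ Dx a (dd b) z)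
      + Auv *ᵥ Dx a v z + Dx a su z
      + (∑ b, DD a b *ᵥ cA u dd b z) + (∑ k, ∑ b, Dbar a k b *ᵥ cIA dd k b z)) ∧
  (∀ z, Dt v z = (∑ i, Bv1u i *ᵥ Dx i u z) + (∑ i, ∑ a, Avu i a *ᵥ Dx i (dd a) z)
      + (∑ i, Avv i *ᵥ Dx i v z) + Avw *ᵥ w z + Bv2u *ᵥ u z + Bv1v *ᵥ v z + sv z
      + (∑ a, Dv a *ᵥ cA u dd a z) + (∑ i, ∑ a, Dbarv i a *ᵥ cIA dd i a z)) ∧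
  (∀ z, Dt w z = (∑ i, ∑ j, Bw1u i j *ᵥ Dx i (Dx j u) z)
      + (∑ i, ∑ j, ∑ a, Awu i j a *ᵥ Dx i (Dx j (dd a)) z)
      + (∑ i, ∑ j, Awv i j *ᵥ Dx i (Dx j v) z) + (∑ i, Aww i *ᵥ Dx i w z)
      + (∑ i, Bw2u i *ᵥ Dx i u z) + Bw3u *ᵥ u z + (∑ i, Bw1v i *ᵥ Dx i v z)
      + Bw2v *ᵥ v z + Bw1w *ᵥ w z + sw z
      + (∑ k, ∑ a, Dw k a *ᵥ Dx k (cA u dd a) z)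
      + (∑ k, ∑ j, ∑ a, Dbarw k j a *ᵥ Dx k (cIA dd j a) z))


/-- closed evolution of the auxiliary constraints.  For every smooth
solution of the FT2S reduction,
`∂ₜ c_a = ((A^u_u)^b + (D^u)^b) ∂_a c_b + (D̄^u)^{kb} ∂_a c_{kb} - D_a^b c_b - D̄_a^{kb} c_{kb}`
and
`∂ₜ c_{ia} = (1/2)(D_a^b ∂ᵢ c_b - D_i^b ∂_a c_b + D̄_a^{kb} ∂ᵢ c_{kb} - D̄_i^{kb} ∂_a c_{kb})`. -/
theorem stmt_9
    (hDbaru : ∀ i a, Dbaru i a = -Dbaru a i)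
    (hDbar : ∀ a k b, Dbar a k b = -Dbar a b k)
    (hDbarv : ∀ i a, Dbarv i a = -Dbarv a i)
    (hDbarw : ∀ k j a, Dbarw k j a = -Dbarw k a j)
    (hsu : ContDiff ℝ (⊤ : ℕ∞) su) (hsv : ContDiff ℝ (⊤ : ℕ∞) sv) (hsw : ContDiff ℝ (⊤ : ℕ∞) sw)
    (u : Spc → Fin nu → ℂ) (dd : Fin 3 → Spc → Fin nu → ℂ)
    (v : Spc → Fin nv → ℂ) (w : Spc → Fin nw → ℂ)
    (hu : ContDiff ℝ (⊤ : ℕ∞) u) (hdd : ∀ a, ContDiff ℝ (⊤ : ℕ∞) (dd a))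
    (hv : ContDiff ℝ (⊤ : ℕ∞) v) (hw : ContDiff ℝ (⊤ : ℕ∞) w)
    (hsol : SolvesFT2S Auu Auv Bu1u Avu Avv Avw Bv1u Bv2u Bv1v Awu Awv Aww Bw1u Bw2u
      Bw3u Bw1v Bw2v Bw1w su sv sw Du Dbaru DD Dbar Dv Dbarv Dw Dbarw u dd v w) :
    (∀ a z, Dt (cA u dd a) z =
      (∑ b, (Auu b + Du b) *ᵥ Dx a (cA u dd b) z)
        + (∑ k, ∑ b, Dbaru k b *ᵥ Dx a (cIA dd k b) z)
        - (∑ b, DD a b *ᵥ cA u dd b z)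
        - (∑ k, ∑ b, Dbar a k b *ᵥ cIA dd k b z)) ∧
    (∀ i a z, Dt (cIA dd i a) z =
      (2 : ℂ)⁻¹ • ((∑ b, DD a b *ᵥ Dx i (cA u dd b) z)
        - (∑ b, DD i b *ᵥ Dx a (cA u dd b) z)
        + (∑ k, ∑ b, Dbar a k b *ᵥ Dx i (cIA dd k b) z)
        - (∑ k, ∑ b, Dbar i k b *ᵥ Dx a (cIA dd k b) z))) := by
  obtain ⟨hU, hDeq, -, -⟩ := hsol
  simp only [Dt_eq, Dx_eq] at hU hDeq ⊢
  -- differentiability facts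
  have hud : Differentiable ℝ u := hu.differentiable (by simp)
  have hvd : Differentiable ℝ v := hv.differentiable (by simp)
  have hddd : ∀ b, Differentiable ℝ (dd b) := fun b => (hdd b).differentiable (by simp)
  have hsud : Differentiable ℝ su := hsu.differentiable (by simp)
  have hDud : ∀ q : Fin 3, Differentiable ℝ (Dir (ev q) u) := fun q => Dir_diff _ hu
  have hDvd : ∀ q : Fin 3, Differentiable ℝ (Dir (ev q) v) := fun q => Dir_diff _ hv
  have hDddd : ∀ q b : Fin 3, Differentiable ℝ (Dir (ev q) (dd b)) :=
    fun q b => Dir_diff _ (hdd b)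
  have hDsud : ∀ q : Fin 3, Differentiable ℝ (Dir (ev q) su) := fun q => Dir_diff _ hsu
  have hcAd : ∀ b, Differentiable ℝ (cA u dd b) := fun b => (hDud b).sub (hddd b)
  have hcIAd : ∀ k b, Differentiable ℝ (cIA dd k b) := fun k b =>
    Differentiable.const_smul ((hDddd k b).sub (hDddd b k)) ((2 : ℂ)⁻¹)
  -- expansion of the spatial derivative of ∂ₜ u
  have expandU : ∀ q : Fin 3, ∀ z, Dir (ev q) (Dir evt u) z =
      (∑ i, Auu i *ᵥ Dir (ev q) (Dir (ev i) u) z) + Auv *ᵥ Dir (ev q) v z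
        + Bu1u *ᵥ Dir (ev q) u z + Dir (ev q) su z
        + (∑ b, Du b *ᵥ Dir (ev q) (cA u dd b) z)
        + (∑ k, ∑ b, Dbaru k b *ᵥ Dir (ev q) (cIA dd k b) z) := by
    intro q z
    have h1 : Differentiable ℝ (fun z => ∑ i, Auu i *ᵥ Dir (ev i) u z) :=
      Differentiable.fun_sum fun i _ => diff_mulVec _ (hDud i)
    have h2 : Differentiable ℝ (fun z => Auv *ᵥ v z) := diff_mulVec _ hvd
    have h3 : Differentiable ℝ (fun z => Bu1u *ᵥ u z) := diff_mulVec _ hud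
    have h5 : Differentiable ℝ (fun z => ∑ b, Du b *ᵥ cA u dd b z) :=
      Differentiable.fun_sum fun b _ => diff_mulVec _ (hcAd b)
    have h6 : Differentiable ℝ (fun z => ∑ k, ∑ b, Dbaru k b *ᵥ cIA dd k b z) :=
      Differentiable.fun_sum fun k _ =>
        Differentiable.fun_sum fun b _ => diff_mulVec _ (hcIAd k b)
    rw [funext hU]
    simp only [Dir_add (ev q) ((((h1.fun_add h2).fun_add h3).fun_add hsud).fun_add h5) h6,
      Dir_add (ev q) (((h1.fun_add h2).fun_add h3).fun_add hsud) h5,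
      Dir_add (ev q) ((h1.fun_add h2).fun_add h3) hsud,
      Dir_add (ev q) (h1.fun_add h2) h3,
      Dir_add (ev q) h1 h2,
      Dir_sumMulVec (ev q) Auu (g := fun i => Dir (ev i) u) hDud,
      Dir_mulVec (ev q) Auv hvd,
      Dir_mulVec (ev q) Bu1u hud,
      Dir_sumMulVec (ev q) Du (g := fun b => cA u dd b) hcAd,
      Dir_sum2MulVec (ev q) Dbaru (g := fun k b => cIA dd k b) hcIAd]
  -- expansion of the spatial derivative of ∂ₜ d_p
  have expandD : ∀ p q : Fin 3, ∀ z, Dir (ev q) (Dir evt (dd p)) z =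
      Bu1u *ᵥ Dir (ev q) (Dir (ev p) u) z
        + (∑ b, Auu b *ᵥ Dir (ev q) (Dir (ev p) (dd b)) z)
        + Auv *ᵥ Dir (ev q) (Dir (ev p) v) z + Dir (ev q) (Dir (ev p) su) z
        + (∑ b, DD p b *ᵥ Dir (ev q) (cA u dd b) z)
        + (∑ k, ∑ b, Dbar p k b *ᵥ Dir (ev q) (cIA dd k b) z) := by
    intro p q z
    have h1 : Differentiable ℝ (fun z => Bu1u *ᵥ Dir (ev p) u z) :=
      diff_mulVec _ (hDud p)
    have h2 : Differentiable ℝ (fun z => ∑ b, Auu b *ᵥ Dir (ev p) (dd b) z) :=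
      Differentiable.fun_sum fun b _ => diff_mulVec _ (hDddd p b)
    have h3 : Differentiable ℝ (fun z => Auv *ᵥ Dir (ev p) v z) :=
      diff_mulVec _ (hDvd p)
    have h4 : Differentiable ℝ (Dir (ev p) su) := hDsud p
    have h5 : Differentiable ℝ (fun z => ∑ b, DD p b *ᵥ cA u dd b z) :=
      Differentiable.fun_sum fun b _ => diff_mulVec _ (hcAd b)
    have h6 : Differentiable ℝ (fun z => ∑ k, ∑ b, Dbar p k b *ᵥ cIA dd k b z) :=
      Differentiable.fun_sum fun k _ =>
        Differentiable.fun_sum fun b _ => diff_mulVec _ (hcIAd k b)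
    rw [funext (hDeq p)]
    simp only [Dir_add (ev q) ((((h1.fun_add h2).fun_add h3).fun_add h4).fun_add h5) h6,
      Dir_add (ev q) (((h1.fun_add h2).fun_add h3).fun_add h4) h5,
      Dir_add (ev q) ((h1.fun_add h2).fun_add h3) h4,
      Dir_add (ev q) (h1.fun_add h2) h3,
      Dir_add (ev q) h1 h2,
      Dir_mulVec (ev q) Bu1u (hDud p),
      Dir_sumMulVec (ev q) Auu (g := fun b => Dir (ev p) (dd b)) (hDddd p),
      Dir_mulVec (ev q) Auv (hDvd p),
      Dir_sumMulVec (ev q) (DD p) (g := fun b => cA u dd b) hcAd,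
      Dir_sum2MulVec (ev q) (Dbar p) (g := fun k b => cIA dd k b) hcIAd]
  -- derivative of the constraint cA
  have hDcA : ∀ p b : Fin 3, ∀ z, Dir (ev p) (cA u dd b) z
      = Dir (ev p) (Dir (ev b) u) z - Dir (ev p) (dd b) z := by
    intro p b
    exact congrFun (Dir_sub (ev p) (hDud b) (hddd b))
  constructor
  · -- evolution of cA
    intro a z
    have hsub : Dir evt (cA u dd a) = fun z => Dir evt (Dir (ev a) u) z - Dir evt (dd a) z :=
      Dir_sub evt (hDud a) (hddd a)
    calc Dir evt (cA u dd a) z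
        = Dir evt (Dir (ev a) u) z - Dir evt (dd a) z := congrFun hsub z
      _ = Dir (ev a) (Dir evt u) z - Dir evt (dd a) z := by
          rw [Dir_swap hu evt (ev a)]
      _ = _ := by
          rw [expandU a z, hDeq a z]
          simp only [hDcA, Matrix.add_mulVec, Matrix.mulVec_sub,
            Finset.sum_add_distrib, Finset.sum_sub_distrib]
          abel
  · -- evolution of cIA
    intro i a z
    have hsm : Dir evt (cIA dd i a) = fun z =>
        (2 : ℂ)⁻¹ • Dir evt (fun z => Dir (ev i) (dd a) z - Dir (ev a) (dd i) z) z :=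
      Dir_smulc evt ((2 : ℂ)⁻¹) ((hDddd i a).sub (hDddd a i))
    have hsb : Dir evt (fun z => Dir (ev i) (dd a) z - Dir (ev a) (dd i) z)
        = fun z => Dir evt (Dir (ev i) (dd a)) z - Dir evt (Dir (ev a) (dd i)) z :=
      Dir_sub evt (hDddd i a) (hDddd a i)
    have swap1 : Dir evt (Dir (ev i) (dd a)) = Dir (ev i) (Dir evt (dd a)) :=
      Dir_swap (hdd a) evt (ev i)
    have swap2 : Dir evt (Dir (ev a) (dd i)) = Dir (ev a) (Dir evt (dd i)) :=
      Dir_swap (hdd i) evt (ev a)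
    have swapu : ∀ z, Dir (ev i) (Dir (ev a) u) z = Dir (ev a) (Dir (ev i) u) z :=
      congrFun (Dir_swap hu (ev i) (ev a))
    have swapd : ∀ b z, Dir (ev i) (Dir (ev a) (dd b)) z
        = Dir (ev a) (Dir (ev i) (dd b)) z :=
      fun b => congrFun (Dir_swap (hdd b) (ev i) (ev a))
    have swapv : ∀ z, Dir (ev i) (Dir (ev a) v) z = Dir (ev a) (Dir (ev i) v) z :=
      congrFun (Dir_swap hv (ev i) (ev a))
    have swaps : ∀ z, Dir (ev i) (Dir (ev a) su) z = Dir (ev a) (Dir (ev i) su) z :=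
      congrFun (Dir_swap hsu (ev i) (ev a))
    calc Dir evt (cIA dd i a) z
        = (2 : ℂ)⁻¹ • (Dir evt (Dir (ev i) (dd a)) z - Dir evt (Dir (ev a) (dd i)) z) := by
          rw [congrFun hsm z, congrFun hsb z]
      _ = (2 : ℂ)⁻¹ • (Dir (ev i) (Dir evt (dd a)) z - Dir (ev a) (Dir evt (dd i)) z) := by
          rw [swap1, swap2]
      _ = _ := by
          rw [expandD a i z, expandD i a z]
          congr 1
          simp only [swapu, swapd, swapv, swaps]
          abel
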